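/- arXiv:2011.12862 — 2 statements merged into one kernel-verified Lean document; each statement's English description precedes it below -/
import Mathlib

section
/- Consider a CTW instance with k = 2b + n jobs and b two-sided cables, let p be a permutation of {1, …, k} and let q = p⁻¹, so q(x) is the job at position x. Define the cost of the tour step from position x to position x+1 to be 1 if the job q(x) is one end of a two-sided cable whose other end has position strictly greater than x + 1 (i.e., the other end was not plugged before position x and is not plugged at position x+1), and 0 otherwise. Then the total tour cost ∑_{x=1}^{2b+n−1} 𝔠(q(x) → q(x+1)) equals S, the number of indices i ∈ {1, …, b} with |p(c_i) − p(c_{i+b})| > 1. Hence the storage cost S of the CTW problem can be expressed as the sum of tour-dependent edge costs of a traveling-salesperson tour. -/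
/-!
Every interrupted cable is charged exactly once, at the earlier of its two ends: a tour step
`x → x + 1` costs `1` precisely when `x = min (p i) (p (i + b))` for a cable `i` whose ends are
more than one position apart. Hence `x ↦` (cable of the job at `x`) is a bijection from the
costly tour steps onto the interrupted cables, with inverse `i ↦ min (p i) (p (i + b))`.
-/

namespace CTW

def partner (b j : ℕ) : ℕ := if j ≤ b then j + b else j - b

def cable (b j : ℕ) : ℕ := if j ≤ b then j else j - b

lemma cable_mem_Icc_and_ends {b j : ℕ} (hj : j ∈ Set.Icc 1 (2 * b)) :
    cable b j ∈ Set.Icc 1 b ∧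
      (cable b j = j ∧ cable b j + b = partner b j ∨
        cable b j = partner b j ∧ cable b j + b = j) := by
  rw [Set.mem_Icc] at hj ⊢
  unfold cable partner
  split_ifs <;> omega

lemma exists_end_eq_min {b i : ℕ} (p : ℕ → ℕ) (hi : i ∈ Set.Icc 1 b) :
    ∃ j ∈ Set.Icc 1 (2 * b), cable b j = i ∧
      p j = min (p i) (p (i + b)) ∧ p (partner b j) = max (p i) (p (i + b)) := by
  rw [Set.mem_Icc] at hi
  have hgt : ¬ i + b ≤ b := by omega
  rcases le_total (p i) (p (i + b)) with h | h
  · exact ⟨i, ⟨hi.1, by omega⟩, if_pos hi.2, (min_eq_left h).symm,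
      by rw [partner, if_pos hi.2, max_eq_right h]⟩
  · exact ⟨i + b, ⟨by omega, by omega⟩, by rw [cable, if_neg hgt, Nat.add_sub_cancel],
      (min_eq_right h).symm, by rw [partner, if_neg hgt, Nat.add_sub_cancel, max_eq_left h]⟩

variable {b k : ℕ} {p q : ℕ → ℕ}

lemma cable_interrupted_of_costly_step (hpq : ∀ x ∈ Set.Icc 1 k, p (q x) = x) {x : ℕ}
    (hx : x ∈ Set.Icc 1 k) (hqx : q x ∈ Set.Icc 1 (2 * b))
    (hcost : x + 1 < p (partner b (q x))) :
    cable b (q x) ∈ Set.Icc 1 b ∧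
      1 < max (p (cable b (q x))) (p (cable b (q x) + b)) -
        min (p (cable b (q x))) (p (cable b (q x) + b)) ∧
      min (p (cable b (q x))) (p (cable b (q x) + b)) = x := by
  have hpx := hpq x hx
  obtain ⟨hmem, ⟨hfst, hsnd⟩ | ⟨hfst, hsnd⟩⟩ := cable_mem_Icc_and_ends hqx <;>
  · refine ⟨hmem, ?_⟩
    rw [hsnd, hfst]
    omega

lemma costly_step_of_interrupted (hp : Set.MapsTo p (Set.Icc 1 k) (Set.Icc 1 k))
    (hqp : ∀ j ∈ Set.Icc 1 k, q (p j) = j) (h2b : 2 * b ≤ k) {i : ℕ} (hi : i ∈ Set.Icc 1 b)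
    (hint : 1 < max (p i) (p (i + b)) - min (p i) (p (i + b))) :
    let x := min (p i) (p (i + b))
    x ∈ Set.Icc 1 (k - 1) ∧
      (1 ≤ q x ∧ q x ≤ 2 * b ∧ x + 1 < p (partner b (q x))) ∧ cable b (q x) = i := by
  obtain ⟨j, hj, hcable, hmin, hmax⟩ := exists_end_eq_min p hi
  have hjk : j ∈ Set.Icc 1 k := ⟨hj.1, hj.2.trans h2b⟩
  have hpartner : partner b j ∈ Set.Icc 1 k := by
    rw [Set.mem_Icc] at hj ⊢
    unfold partner
    split_ifs <;> omega
  have hpj := hp hjk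
  have hpp := hp hpartner
  dsimp only
  rw [← hmin, hqp j hjk]
  rw [Set.mem_Icc] at hj hpj hpp ⊢
  exact ⟨by omega, ⟨hj.1, hj.2, by omega⟩, hcable⟩

theorem card_costly_steps_eq (hp : Set.MapsTo p (Set.Icc 1 k) (Set.Icc 1 k))
    (hpq : ∀ x ∈ Set.Icc 1 k, p (q x) = x) (hqp : ∀ j ∈ Set.Icc 1 k, q (p j) = j)
    (h2b : 2 * b ≤ k) :
    ((Finset.Icc 1 (k - 1)).filter fun x =>
        1 ≤ q x ∧ q x ≤ 2 * b ∧ x + 1 < p (partner b (q x))).card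
      = ((Finset.Icc 1 b).filter fun i =>
          1 < max (p i) (p (i + b)) - min (p i) (p (i + b))).card := by
  have hxk {x : ℕ} (hx : 1 ≤ x ∧ x ≤ k - 1) : x ∈ Set.Icc 1 k := ⟨hx.1, by omega⟩
  apply Finset.card_nbij' (fun x => cable b (q x)) (fun i => min (p i) (p (i + b)))
  all_goals simp only [Finset.coe_filter, Finset.mem_Icc]
  · intro x hx
    have h := cable_interrupted_of_costly_step hpq (hxk hx.1) ⟨hx.2.1, hx.2.2.1⟩ hx.2.2.2
    exact ⟨h.1, h.2.1⟩
  · intro i hi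
    have h := costly_step_of_interrupted hp hqp h2b hi.1 hi.2
    exact ⟨h.1, h.2.1⟩
  · intro x hx
    exact (cable_interrupted_of_costly_step hpq (hxk hx.1) ⟨hx.2.1, hx.2.2.1⟩ hx.2.2.2).2.2
  · intro i hi
    exact (costly_step_of_interrupted hp hqp h2b hi.1 hi.2).2.2

end CTW

theorem ctw_S_eq_tour_cost_general (b n k : ℕ) (hk : k = 2 * b + n)
    (p q : ℕ → ℕ)
    (hp : Set.BijOn p (Set.Icc 1 k) (Set.Icc 1 k))
    (hpq : ∀ x ∈ Set.Icc 1 k, p (q x) = x ∧ q (p x) = x) :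
    (∑ x ∈ Finset.Icc 1 (k - 1),
        if 1 ≤ q x ∧ q x ≤ 2 * b ∧
            x + 1 < p (if q x ≤ b then q x + b else q x - b)
        then 1 else 0)
      = ((Finset.Icc 1 b).filter fun i =>
          1 < max (p i) (p (i + b)) - min (p i) (p (i + b))).card := by
  rw [← Finset.card_filter]
  exact CTW.card_costly_steps_eq hp.mapsTo (fun x hx => (hpq x hx).1)
    (fun j hj => (hpq j hj).2) (by omega)

/-- The storage cost `S` equals the total tour-dependent edge cost of the corresponding
traveling-salesperson tour: summing, over consecutive tour positions `x`, the cost `1`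
exactly when the job at position `x` is one end of a two-sided cable whose other end has
position strictly greater than `x + 1`, yields the number of interrupted job pairs. -/
theorem ctw_S_eq_tour_cost (b n k : ℕ) (hk : k = 2 * b + n)
    (p q : ℕ → ℕ)
    (hp : Set.BijOn p (Set.Icc 1 k) (Set.Icc 1 k))
    (hq : Set.MapsTo q (Set.Icc 1 k) (Set.Icc 1 k))
    (hpq : ∀ x ∈ Set.Icc 1 k, p (q x) = x ∧ q (p x) = x) :
    (∑ x ∈ Finset.Icc 1 (k - 1),
        if 1 ≤ q x ∧ q x ≤ 2 * b ∧
            x + 1 < p (if q x ≤ b then q x + b else q x - b)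
        then 1 else 0)
      = ((Finset.Icc 1 b).filter fun i =>
          1 < max (p i) (p (i + b)) - min (p i) (p (i + b))).card :=
  ctw_S_eq_tour_cost_general b n k hk p q hp hpq
end

section
/- Consider a CTW instance with k = 2b + n jobs and b two-sided cables, let p be a permutation of {1, …, k} and q = p⁻¹. For each index i ∈ {1, …, b} with |p(c_i) − p(c_{i+b})| > 1 (an interrupted job pair), there is exactly one position x ∈ {1, …, k−1} such that q(x) ∈ {c_i, c_{i+b}} and the position of the other end of the pair is strictly greater than x + 1; and for each i with |p(c_i) − p(c_{i+b})| ≤ 1 there is no such position. Hence every interrupted job pair contributes exactly one cost-1 edge to the corresponding tour, namely the edge leaving its first-plugged end. -/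
/-- Every interrupted job pair contributes exactly one cost-1 edge to the tour
(the edge leaving its first-plugged end), and every non-interrupted pair contributes
none. -/
theorem ctw_interrupted_pair_unique_cost_edge (b n k : ℕ) (hk : k = 2 * b + n)
    (p q : ℕ → ℕ)
    (hp : Set.BijOn p (Set.Icc 1 k) (Set.Icc 1 k))
    (hq : Set.MapsTo q (Set.Icc 1 k) (Set.Icc 1 k))
    (hpq : ∀ x ∈ Set.Icc 1 k, p (q x) = x ∧ q (p x) = x) :
    ∀ i ∈ Finset.Icc 1 b,
      (1 < max (p i) (p (i + b)) - min (p i) (p (i + b)) →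
        ∃! x : ℕ, x ∈ Finset.Icc 1 (k - 1) ∧
          ((q x = i ∧ x + 1 < p (i + b)) ∨ (q x = i + b ∧ x + 1 < p i))) ∧
      (max (p i) (p (i + b)) - min (p i) (p (i + b)) ≤ 1 →
        ¬ ∃ x : ℕ, x ∈ Finset.Icc 1 (k - 1) ∧
          ((q x = i ∧ x + 1 < p (i + b)) ∨ (q x = i + b ∧ x + 1 < p i))) := by
  intro i hi
  obtain ⟨hi1, hib⟩ := Finset.mem_Icc.mp hi
  have hik : i ∈ Set.Icc 1 k := ⟨hi1, by omega⟩
  have hibk : i + b ∈ Set.Icc 1 k := ⟨by omega, by omega⟩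
  obtain ⟨hpi1, hpi2⟩ := hp.mapsTo hik
  obtain ⟨hpb1, hpb2⟩ := hp.mapsTo hibk
  have hqpi : q (p i) = i := (hpq i hik).2
  have hqpib : q (p (i + b)) = i + b := (hpq (i + b) hibk).2
  have key : ∀ x, 1 ≤ x → x ≤ k → q x = i → x = p i := by
    intro x h1 h2 hqx
    have h := (hpq x ⟨h1, h2⟩).1
    rw [hqx] at h; omega
  have key2 : ∀ x, 1 ≤ x → x ≤ k → q x = i + b → x = p (i + b) := by
    intro x h1 h2 hqx
    have h := (hpq x ⟨h1, h2⟩).1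
    rw [hqx] at h; omega
  constructor
  · intro hlt
    rcases Nat.lt_or_ge (p i) (p (i + b)) with hc | hc
    · refine ⟨p i, ⟨Finset.mem_Icc.mpr ⟨hpi1, by omega⟩, Or.inl ⟨hqpi, by omega⟩⟩, ?_⟩
      rintro y ⟨hy, hcase⟩
      obtain ⟨hy1, hy2⟩ := Finset.mem_Icc.mp hy
      rcases hcase with ⟨hqy, _⟩ | ⟨hqy, hlt2⟩
      · exact key y hy1 (by omega) hqy
      · have := key2 y hy1 (by omega) hqy
        omega
    · have hc' : p (i + b) < p i := by omega
      refine ⟨p (i + b), ⟨Finset.mem_Icc.mpr ⟨hpb1, by omega⟩, Or.inr ⟨hqpib, by omega⟩⟩, ?_⟩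
      rintro y ⟨hy, hcase⟩
      obtain ⟨hy1, hy2⟩ := Finset.mem_Icc.mp hy
      rcases hcase with ⟨hqy, hlt2⟩ | ⟨hqy, _⟩
      · have := key y hy1 (by omega) hqy
        omega
      · exact key2 y hy1 (by omega) hqy
  · rintro hle ⟨x, hx, hcase⟩
    obtain ⟨hx1, hx2⟩ := Finset.mem_Icc.mp hx
    rcases hcase with ⟨hqx, hlt2⟩ | ⟨hqx, hlt2⟩
    · have := key x hx1 (by omega) hqx
      omega
    · have := key2 x hx1 (by omega) hqx
      omega
end
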